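/- Let M be a finitely-branching MDP with absorbing terminal state ⊥ that is almost surely terminating from σ, suppose Reach(σ) is infinite, and let e : ℕ → Reach(σ) be a bijection with e(0) = ⊥. For i, n ∈ ℕ define R(i, n) to be the supremum over all schedulers 𝔰 of ℙ_{𝔰,e(i)}(the run visits some state e(m) with m ≥ n). Then for every i ∈ ℕ, R(i, n) → 0 as n → ∞. -/

import Mathlib

open scoped ENNReal Classical

/-- A finitely-branching MDP on a state space `S`: each state has a nonempty finite
set of available actions, each a finitely-supported PMF on `S`. -/
structure MDP (S : Type) where
  act : S → Finset (PMF S)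
  act_nonempty : ∀ s, (act s).Nonempty
  act_finSupp : ∀ s, ∀ μ ∈ act s, (μ : PMF S).support.Finite

/-- A scheduler maps every history `(s₀, …, sₙ)` (given as the list of earlier
states `s₀, …, sₙ₋₁` together with the current state `sₙ`) to an available action. -/
structure Scheduler {S : Type} (M : MDP S) where
  choose : List S → S → PMF S
  choose_mem : ∀ hist s, choose hist s ∈ M.act s

namespace MDP

variable {S : Type}

/-- Reachability: `s'` is reachable from `σ` via a finite path each of whose steps
lies in the support of some available action. -/
inductive Reach (M : MDP S) (σ : S) : S → Prop
  | refl : Reach M σ σ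
  | step {s s' : S} (μ : PMF S) : Reach M σ s → μ ∈ M.act s → s' ∈ μ.support → Reach M σ s'

/-- Probability that the run (currently at `s`, with past history `hist`) visits the
set `T` within the next `k` steps, under scheduler `𝔰`. -/
noncomputable def hitProbAux (M : MDP S) (𝔰 : Scheduler M) (T : Set S) :
    ℕ → List S → S → ℝ≥0∞
  | 0, _, s => if s ∈ T then 1 else 0
  | k + 1, hist, s =>
      if s ∈ T then 1
      else ∑' s', (𝔰.choose hist s) s' * hitProbAux M 𝔰 T k (hist ++ [s]) s'

/-- Probability that the run started at `σ` visits `T` within the first `k` steps. -/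
noncomputable def hitProbWithin (M : MDP S) (𝔰 : Scheduler M) (σ : S) (T : Set S)
    (k : ℕ) : ℝ≥0∞ :=
  hitProbAux M 𝔰 T k [] σ

/-- Probability that the run started at `σ` ever visits `T`, under scheduler `𝔰`. -/
noncomputable def hitProb (M : MDP S) (𝔰 : Scheduler M) (σ : S) (T : Set S) : ℝ≥0∞ :=
  ⨆ k, hitProbWithin M 𝔰 σ T k

/-- The terminal state `term` is absorbing: the only action there is the Dirac PMF. -/
def Absorbing (M : MDP S) (term : S) : Prop :=
  M.act term = {PMF.pure term}

/-- Termination probability: infimum over schedulers of the probability of visiting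
the terminal state. -/
noncomputable def PrTerm (M : MDP S) (term σ : S) : ℝ≥0∞ :=
  ⨅ 𝔰 : Scheduler M, hitProb M 𝔰 σ {term}

/-- Almost-sure termination from `σ`. -/
def AST (M : MDP S) (term σ : S) : Prop := PrTerm M term σ = 1

/-- Mass a PMF assigns to a set. -/
noncomputable def mass (μ : PMF S) (A : Set S) : ℝ≥0∞ := ∑' a : A, μ a

/-- Expected value of a real-valued function under a (finitely supported) PMF. -/
noncomputable def expect (μ : PMF S) (V : S → ℝ) : ℝ := ∑' s, (μ s).toReal * V s

/-- `V` is a supermartingale function on the states reachable from `σ`. -/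
def SupermartingaleOn (M : MDP S) (σ : S) (V : S → ℝ) : Prop :=
  ∀ s, M.Reach σ s → ∀ μ ∈ M.act s, expect μ V ≤ V s

/-- `(Ψ, p)` is a stochastic invariant for initial state `σ`: under every scheduler the
probability that the run ever leaves `Ψ` is at most `p`. -/
def StochasticInvariant (M : MDP S) (σ : S) (Ψ : Set S) (p : ℝ) : Prop :=
  ⨆ 𝔰 : Scheduler M, hitProb M 𝔰 σ Ψᶜ ≤ ENNReal.ofReal p

end MDP

/-!
Finite branching makes value iteration converge to the minimal termination probability:
a scheduler that is greedy for the limit value does no better than it, so almost sure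
termination from `σ` forces the limit to be `1` at `σ`, hence at every reachable state. For
`ε > 0` this yields a `k` such that from `e i` every scheduler terminates within `k` steps
with probability at least `1 - ε`. Only finitely many states are reachable in `k` steps, so
for large `n` none of them lies in `{e m | m ≥ n}`; as `e 0 = term` is absorbing, a run that
visits that set must then survive `k` steps without terminating.
-/

theorem ENNReal.tsum_iSup_of_monotone {α : Type*} {f : ℕ → α → ℝ≥0∞} (hf : Monotone f) :
    ∑' a, ⨆ k, f k a = ⨆ k, ∑' a, f k a := by
  simp_rw [ENNReal.tsum_eq_iSup_sum,
    ENNReal.finsetSum_iSup_of_monotone fun a _ _ hkl => hf hkl a]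
  exact iSup_comm

namespace PMF

variable {S : Type} (μ : PMF S) {f : S → ℝ≥0∞}

theorem tsum_mul_le_one (hf : ∀ x, f x ≤ 1) : ∑' x, μ x * f x ≤ 1 :=
  calc ∑' x, μ x * f x ≤ ∑' x, μ x * 1 := by gcongr with x; exact hf x
    _ = 1 := by simp

theorem eq_one_of_one_le_tsum_mul (hf : ∀ x, f x ≤ 1) (h : 1 ≤ ∑' x, μ x * f x) {x : S}
    (hx : x ∈ μ.support) : f x = 1 := by
  refine (hf x).antisymm (not_lt.mp fun hlt => h.not_gt ?_)
  calc ∑' y, μ y * f y < ∑' y, μ y * 1 :=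
        ENNReal.tsum_lt_tsum (ne_top_of_le_ne_top ENNReal.one_ne_top (μ.tsum_mul_le_one hf))
          (fun y => by gcongr; exact hf y)
          (ENNReal.mul_lt_mul_right ((μ.mem_support_iff x).mp hx) (μ.apply_ne_top x) hlt)
    _ = 1 := by simp

end PMF

namespace MDP

variable {S : Type} (M : MDP S)

section Hitting

variable (𝔰 : Scheduler M) {T : Set S} {term : S}

theorem hitProbAux_le_one (T : Set S) : ∀ k hist s, M.hitProbAux 𝔰 T k hist s ≤ 1
  | 0, _, s => by simp only [hitProbAux]; split <;> simp
  | k + 1, hist, s => by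
    simp only [hitProbAux]
    split
    · exact le_rfl
    · exact PMF.tsum_mul_le_one _ fun s' => hitProbAux_le_one T k _ s'

theorem hitProbAux_term_eq_zero (hterm : M.Absorbing term) (hT : term ∉ T) :
    ∀ k hist, M.hitProbAux 𝔰 T k hist term = 0
  | 0, _ => by simp [hitProbAux, hT]
  | k + 1, hist => by
    have hpure : 𝔰.choose hist term = PMF.pure term := by
      have hact : M.act term = {PMF.pure term} := hterm
      simpa [hact] using 𝔰.choose_mem hist term
    simp [hitProbAux, hT, hpure, hitProbAux_term_eq_zero hterm hT k]

/-- `P(A) + P(B) ≤ 1 + P(A ∩ B)`: since `term ∉ T` is absorbing, a run that terminates within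
`k` steps and visits `T` at all has visited `T` within `k` steps. -/
theorem hitProbAux_add_hitProbAux_term_le (hterm : M.Absorbing term) (hT : term ∉ T) :
    ∀ k j hist s, M.hitProbAux 𝔰 T j hist s + M.hitProbAux 𝔰 {term} k hist s ≤
      1 + M.hitProbAux 𝔰 T k hist s
  | k, j, hist, s => by
    by_cases hsT : s ∈ T
    · have hk : M.hitProbAux 𝔰 T k hist s = 1 := by cases k <;> simp [hitProbAux, hsT]
      rw [hk]
      gcongr <;> apply hitProbAux_le_one
    by_cases hs : s = term
    · rw [hs, M.hitProbAux_term_eq_zero 𝔰 hterm hT j hist, zero_add]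
      exact (M.hitProbAux_le_one 𝔰 _ _ hist term).trans le_self_add
    have hs' : s ∉ ({term} : Set S) := hs
    match k, j with
    | 0, j =>
      rw [hitProbAux, if_neg hs', add_zero]
      exact (M.hitProbAux_le_one 𝔰 _ _ hist s).trans le_self_add
    | k + 1, 0 =>
      rw [hitProbAux, if_neg hsT, zero_add]
      exact (M.hitProbAux_le_one 𝔰 _ _ hist s).trans le_self_add
    | k + 1, j + 1 =>
      simp only [hitProbAux, if_neg hsT, if_neg hs', ← ENNReal.tsum_add, ← mul_add]
      calc ∑' s', 𝔰.choose hist s s' * (M.hitProbAux 𝔰 T j (hist ++ [s]) s' +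
              M.hitProbAux 𝔰 {term} k (hist ++ [s]) s')
          ≤ ∑' s', 𝔰.choose hist s s' * (1 + M.hitProbAux 𝔰 T k (hist ++ [s]) s') :=
            ENNReal.tsum_le_tsum fun s' => mul_le_mul_right
              (hitProbAux_add_hitProbAux_term_le hterm hT k j _ s') _
        _ = 1 + ∑' s', 𝔰.choose hist s s' * M.hitProbAux 𝔰 T k (hist ++ [s]) s' := by
            simp [mul_add, ENNReal.tsum_add]

end Hitting

def reachWithin : ℕ → S → Set S
  | 0, s => {s}
  | k + 1, s => insert s (⋃ μ ∈ M.act s, ⋃ s' ∈ μ.support, reachWithin k s')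

theorem reachWithin_finite : ∀ k s, (M.reachWithin k s).Finite
  | 0, s => Set.finite_singleton s
  | k + 1, s => by
    refine Set.Finite.insert s ((M.act s).finite_toSet.biUnion fun μ hμ => ?_)
    exact (M.act_finSupp s μ hμ).biUnion fun s' _ => reachWithin_finite k s'

theorem mem_reachWithin_self : ∀ k s, s ∈ M.reachWithin k s
  | 0, _ => rfl
  | _ + 1, _ => Set.mem_insert _ _

theorem reachWithin_subset_succ {k : ℕ} {s s' : S} {μ : PMF S} (hμ : μ ∈ M.act s)
    (hs' : s' ∈ μ.support) : M.reachWithin k s' ⊆ M.reachWithin (k + 1) s :=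
  fun _ hx => Set.mem_insert_of_mem _ (Set.mem_biUnion hμ (Set.mem_biUnion hs' hx))

theorem hitProbAux_eq_zero_of_disjoint (𝔰 : Scheduler M) {T : Set S} :
    ∀ k hist s, Disjoint (M.reachWithin k s) T → M.hitProbAux 𝔰 T k hist s = 0
  | 0, _, s, h => by
    simp [hitProbAux, Set.disjoint_left.mp h (M.mem_reachWithin_self 0 s)]
  | k + 1, hist, s, h => by
    simp only [hitProbAux, if_neg (Set.disjoint_left.mp h (M.mem_reachWithin_self _ s))]
    refine ENNReal.tsum_eq_zero.mpr fun s' => ?_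
    by_cases hs' : s' ∈ (𝔰.choose hist s).support
    · rw [hitProbAux_eq_zero_of_disjoint 𝔰 k _ s'
        (h.mono_left (M.reachWithin_subset_succ (𝔰.choose_mem hist s) hs')), mul_zero]
    · rw [(PMF.apply_eq_zero_iff _ _).mpr hs', zero_mul]

theorem hitProb_le_of_disjoint_reachWithin {𝔰 : Scheduler M} {T : Set S} {term s : S}
    {k : ℕ} {ε : ℝ≥0∞} (hterm : M.Absorbing term) (hT : term ∉ T)
    (hdisj : Disjoint (M.reachWithin k s) T) (hε : 1 ≤ M.hitProbWithin 𝔰 s {term} k + ε) :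
    M.hitProb 𝔰 s T ≤ ε := by
  refine iSup_le fun j => ENNReal.le_of_add_le_add_right
    (ne_top_of_le_ne_top ENNReal.one_ne_top (M.hitProbAux_le_one 𝔰 {term} k [] s)) ?_
  calc M.hitProbWithin 𝔰 s T j + M.hitProbWithin 𝔰 s {term} k
      ≤ 1 + M.hitProbWithin 𝔰 s T k := M.hitProbAux_add_hitProbAux_term_le 𝔰 hterm hT k j [] s
    _ = 1 := by rw [hitProbWithin, M.hitProbAux_eq_zero_of_disjoint 𝔰 k [] s hdisj, add_zero]
    _ ≤ ε + M.hitProbWithin 𝔰 s {term} k := by rwa [add_comm]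

section ValueIteration

variable (term : S)

noncomputable def minTermProbWithin : ℕ → S → ℝ≥0∞
  | 0, s => if s = term then 1 else 0
  | k + 1, s =>
      if s = term then 1 else ⨅ μ : M.act s, ∑' s', (μ : PMF S) s' * minTermProbWithin k s'

noncomputable def minTermProb (s : S) : ℝ≥0∞ := ⨆ k, M.minTermProbWithin term k s

theorem minTermProbWithin_le_one : ∀ k s, M.minTermProbWithin term k s ≤ 1
  | 0, s => by simp only [minTermProbWithin]; split <;> simp
  | k + 1, s => by
    simp only [minTermProbWithin]
    split
    · exact le_rfl
    · obtain ⟨μ, hμ⟩ := M.act_nonempty s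
      exact (iInf_le _ ⟨μ, hμ⟩).trans
        (PMF.tsum_mul_le_one μ fun s' => minTermProbWithin_le_one k s')

theorem minTermProbWithin_le_succ : ∀ k s, M.minTermProbWithin term k s ≤
    M.minTermProbWithin term (k + 1) s
  | 0, s => by simp only [minTermProbWithin]; split <;> simp
  | k + 1, s => by
    simp only [minTermProbWithin]
    split
    · exact le_rfl
    · exact iInf_mono fun μ =>
        ENNReal.tsum_le_tsum fun s' => mul_le_mul_right (minTermProbWithin_le_succ k s') _

theorem monotone_minTermProbWithin : Monotone (M.minTermProbWithin term) :=
  monotone_nat_of_le_succ fun k s => M.minTermProbWithin_le_succ term k s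

theorem minTermProbWithin_le_hitProbAux (𝔰 : Scheduler M) :
    ∀ k hist s, M.minTermProbWithin term k s ≤ M.hitProbAux 𝔰 {term} k hist s
  | 0, _, s => by by_cases h : s = term <;> simp [minTermProbWithin, hitProbAux, h]
  | k + 1, hist, s => by
    by_cases h : s = term
    · simp [minTermProbWithin, hitProbAux, h]
    · simp only [minTermProbWithin, hitProbAux, if_neg h,
        if_neg (show s ∉ ({term} : Set S) from h)]
      exact (iInf_le _ ⟨𝔰.choose hist s, 𝔰.choose_mem hist s⟩).trans <|
        ENNReal.tsum_le_tsum fun s' =>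
          mul_le_mul_right (minTermProbWithin_le_hitProbAux 𝔰 k _ s') _

theorem minTermProb_le_one (s : S) : M.minTermProb term s ≤ 1 :=
  iSup_le fun k => M.minTermProbWithin_le_one term k s

theorem minTermProb_term : M.minTermProb term term = 1 :=
  (M.minTermProb_le_one term term).antisymm (le_iSup_of_le 0 (by simp [minTermProbWithin]))

theorem minTermProb_le_tsum {s : S} (hs : s ≠ term) {μ : PMF S} (hμ : μ ∈ M.act s) :
    M.minTermProb term s ≤ ∑' s', μ s' * M.minTermProb term s' := by
  refine iSup_le fun k => ?_
  cases k with
  | zero => simp [minTermProbWithin, hs]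
  | succ k =>
    simp only [minTermProbWithin, if_neg hs]
    exact (iInf_le _ ⟨μ, hμ⟩).trans <| ENNReal.tsum_le_tsum fun s' =>
      mul_le_mul_right (le_iSup (M.minTermProbWithin term · s') k) _

/-- Interchanging `⨅` and `⨆` is where finitely many actions per state are used. -/
theorem iInf_tsum_le_minTermProb {s : S} (hs : s ≠ term) :
    ⨅ μ : M.act s, ∑' s', (μ : PMF S) s' * M.minTermProb term s' ≤ M.minTermProb term s := by
  have : Nonempty (M.act s) := (M.act_nonempty s).coe_sort
  have hmono (μ : M.act s) :
      Monotone fun k => ∑' s', (μ : PMF S) s' * M.minTermProbWithin term k s' :=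
    fun _ _ hkl => ENNReal.tsum_le_tsum fun s' =>
      mul_le_mul_right (M.monotone_minTermProbWithin term hkl s') _
  calc ⨅ μ : M.act s, ∑' s', (μ : PMF S) s' * M.minTermProb term s'
      = ⨅ μ : M.act s, ⨆ k, ∑' s', (μ : PMF S) s' * M.minTermProbWithin term k s' := by
        refine iInf_congr fun μ => ?_
        simp_rw [minTermProb, ENNReal.mul_iSup]
        exact ENNReal.tsum_iSup_of_monotone fun k l hkl s' =>
          mul_le_mul_right (M.monotone_minTermProbWithin term hkl s') _
    _ = ⨆ k, ⨅ μ : M.act s, ∑' s', (μ : PMF S) s' * M.minTermProbWithin term k s' :=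
        (iSup_iInf_of_monotone hmono).symm
    _ ≤ M.minTermProb term s := iSup_le fun k =>
        le_iSup_of_le (k + 1) (by rw [minTermProbWithin, if_neg hs])

end ValueIteration

section Greedy

variable (term : S)

theorem exists_greedyAction (s : S) : ∃ μ ∈ M.act s,
    ∀ ν ∈ M.act s, ∑' s', μ s' * M.minTermProb term s' ≤ ∑' s', ν s' * M.minTermProb term s' :=
  (M.act s).exists_min_image _ (M.act_nonempty s)

noncomputable def greedyScheduler : Scheduler M where
  choose _ s := (M.exists_greedyAction term s).choose
  choose_mem _ s := (M.exists_greedyAction term s).choose_spec.1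

theorem hitProbAux_greedyScheduler_le :
    ∀ k hist s, M.hitProbAux (M.greedyScheduler term) {term} k hist s ≤ M.minTermProb term s
  | 0, _, s => by
    by_cases h : s = term
    · simp [hitProbAux, h, minTermProb_term]
    · simp [hitProbAux, h]
  | k + 1, hist, s => by
    by_cases h : s = term
    · simp [hitProbAux, h, minTermProb_term]
    simp only [hitProbAux, if_neg (show s ∉ ({term} : Set S) from h)]
    obtain ⟨-, hmin⟩ := (M.exists_greedyAction term s).choose_spec
    calc _ ≤ ∑' s', (M.exists_greedyAction term s).choose s' * M.minTermProb term s' :=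
          ENNReal.tsum_le_tsum fun s' =>
            mul_le_mul_right (hitProbAux_greedyScheduler_le k _ s') _
      _ ≤ ⨅ μ : M.act s, ∑' s', (μ : PMF S) s' * M.minTermProb term s' :=
          le_iInf fun μ => hmin μ μ.2
      _ ≤ M.minTermProb term s := M.iInf_tsum_le_minTermProb term h

theorem prTerm_le_minTermProb (s : S) : M.PrTerm term s ≤ M.minTermProb term s :=
  (iInf_le _ (M.greedyScheduler term)).trans <|
    iSup_le fun k => M.hitProbAux_greedyScheduler_le term k [] s

end Greedy

variable {M} {term : S}

/-- A successor of value `< 1` would pull the value of its predecessor below `1`. -/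
theorem minTermProb_eq_one_of_reach (hterm : M.Absorbing term) {σ : S} (hAST : M.AST term σ) :
    ∀ {s}, M.Reach σ s → M.minTermProb term s = 1
  | _, .refl => (M.minTermProb_le_one term σ).antisymm (hAST.symm.trans_le
      (M.prTerm_le_minTermProb term σ))
  | _, .step (s := s) μ hr hμ hsupp => by
    by_cases hs : s = term
    · have hact : M.act term = {PMF.pure term} := hterm
      subst hs
      rw [hact, Finset.mem_singleton] at hμ
      subst hμ
      rw [PMF.support_pure, Set.mem_singleton_iff] at hsupp
      rw [hsupp, minTermProb_term]
    · refine μ.eq_one_of_one_le_tsum_mul (M.minTermProb_le_one term) ?_ hsupp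
      exact (minTermProb_eq_one_of_reach hterm hAST hr).symm.trans_le
        (M.minTermProb_le_tsum term hs hμ)

theorem exists_one_le_hitProbWithin_add (hterm : M.Absorbing term) {σ s : S}
    (hAST : M.AST term σ) (hs : M.Reach σ s) {ε : ℝ≥0∞} (hε : 0 < ε) :
    ∃ k, ∀ 𝔰 : Scheduler M, 1 ≤ M.hitProbWithin 𝔰 s {term} k + ε := by
  have h : 1 < ⨆ k, (M.minTermProbWithin term k s + ε) := by
    rw [← ENNReal.iSup_add, ← minTermProb, minTermProb_eq_one_of_reach hterm hAST hs]
    exact ENNReal.lt_add_right ENNReal.one_ne_top hε.ne'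
  obtain ⟨k, hk⟩ := lt_iSup_iff.mp h
  exact ⟨k, fun 𝔰 => hk.le.trans <|
    add_le_add_left (M.minTermProbWithin_le_hitProbAux term 𝔰 k [] s) ε⟩

end MDP

theorem reach_far_tendsto_zero_general {S : Type} (M : MDP S) (term σ : S)
    (hterm : M.Absorbing term) (hAST : M.AST term σ)
    (e : ℕ → S) (he_mem : ∀ n, M.Reach σ (e n)) (he_inj : Function.Injective e)
    (he0 : e 0 = term) :
    ∀ i : ℕ, Filter.Tendsto
      (fun n => ⨆ 𝔰 : Scheduler M, M.hitProb 𝔰 (e i) {s | ∃ m, n ≤ m ∧ e m = s})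
      Filter.atTop (nhds 0) := by
  intro i
  refine ENNReal.tendsto_atTop_zero.mpr fun ε hε => ?_
  obtain ⟨k, hk⟩ := MDP.exists_one_le_hitProbWithin_add hterm hAST (he_mem i) hε
  obtain ⟨N, hN⟩ := ((M.reachWithin_finite k (e i)).preimage he_inj.injOn).bddAbove
  refine ⟨N + 1, fun n hn => iSup_le fun 𝔰 => ?_⟩
  refine M.hitProb_le_of_disjoint_reachWithin hterm ?_ ?_ (hk 𝔰)
  · rintro ⟨m, hm, hem⟩
    have : m = 0 := he_inj (hem.trans he0.symm)
    omega
  · refine Set.disjoint_left.mpr fun x hx ⟨m, hm, hem⟩ => ?_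
    have : m ≤ N := hN (show e m ∈ M.reachWithin k (e i) from hem ▸ hx)
    omega

/-- Let `M` be almost surely terminating from `σ` with infinitely many reachable states, and
let `e : ℕ → S` enumerate the reachable states bijectively with `e 0` the terminal state.
Define `R i n` as the supremum over schedulers of the probability that a run started at
`e i` visits some state `e m` with `m ≥ n`.  Then `R i n → 0` as `n → ∞`, for every `i`. -/
theorem reach_far_tendsto_zero {S : Type} [Countable S] (M : MDP S) (term σ : S)
    (hterm : M.Absorbing term) (hAST : M.AST term σ)
    (hinf : {s | M.Reach σ s}.Infinite)
    (e : ℕ → S) (he_mem : ∀ n, M.Reach σ (e n)) (he_inj : Function.Injective e)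
    (he_surj : ∀ s, M.Reach σ s → ∃ n, e n = s) (he0 : e 0 = term) :
    ∀ i : ℕ, Filter.Tendsto
      (fun n => ⨆ 𝔰 : Scheduler M, M.hitProb 𝔰 (e i) {s | ∃ m, n ≤ m ∧ e m = s})
      Filter.atTop (nhds 0) :=
  reach_far_tendsto_zero_general M term σ hterm hAST e he_mem he_inj he0
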